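/- (Michel's inequality) For every integer n ≥ 3, |e^{r_n} − 1 − 1/(12n) − 1/(288 n^2)| ≤ 1/(360 n^3) + 1/(108 n^4), where r_n = ln( n!·e^n / (√(2πn)·n^n) ), so that e^{r_n} = n!·e^n / (√(2πn)·n^n). -/

import Mathlib

open Real Nat

/-- `r_n = ln ( n! eⁿ / (√(2πn) nⁿ) )`, the logarithmic error in Stirling's formula. -/
noncomputable def stirlingError (n : ℕ) : ℝ :=
  Real.log ((n ! : ℝ) * Real.exp n / (Real.sqrt (2 * π * n) * (n : ℝ) ^ n))

section MichelAux

open Filter Topology Stirling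


lemma stirlingError_eq (n : ℕ) (hn : 1 ≤ n) :
    stirlingError n = Real.log (stirlingSeq n) - Real.log (Real.sqrt π) := by
  have hn0 : (0:ℝ) < n := by exact_mod_cast hn
  have hπ : (0:ℝ) < π := Real.pi_pos
  have h1 : Real.sqrt (2*π*n) = Real.sqrt π * Real.sqrt (2*n) := by
    rw [show (2*π*n:ℝ) = π*(2*n) by ring, Real.sqrt_mul hπ.le]
  have h2 : Real.sqrt (2*(n:ℝ)) > 0 := Real.sqrt_pos.mpr (by positivity)
  have h3 : Real.sqrt π > 0 := Real.sqrt_pos.mpr hπ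
  have harg : (n ! : ℝ) * Real.exp n / (Real.sqrt (2 * π * n) * (n : ℝ) ^ n)
      = stirlingSeq n / Real.sqrt π := by
    rw [stirlingSeq, div_pow, Real.exp_one_pow, h1]
    have he : Real.exp (n:ℝ) > 0 := Real.exp_pos _
    have hnn : (0:ℝ) < (n:ℝ)^n := by positivity
    field_simp
  obtain ⟨m, rfl⟩ : ∃ m, n = m + 1 := ⟨n-1, (Nat.succ_pred_eq_of_pos hn).symm⟩
  rw [stirlingError, harg, Real.log_div (stirlingSeq'_pos m).ne' h3.ne']

lemma tendsto_stirlingError : Tendsto stirlingError atTop (𝓝 0) := by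
  have hπ : (0:ℝ) < Real.sqrt π := Real.sqrt_pos.mpr Real.pi_pos
  have h1 : Tendsto (fun n => Real.log (stirlingSeq n) - Real.log (Real.sqrt π)) atTop (𝓝 0) := by
    have := ((Real.continuousAt_log hπ.ne').tendsto.comp tendsto_stirlingSeq_sqrt_pi).sub
      (tendsto_const_nhds (x := Real.log (Real.sqrt π)))
    simpa using this
  exact h1.congr' (by filter_upwards [eventually_ge_atTop 1] with n hn
    using (stirlingError_eq n hn).symm)


lemma aux_geo (x : ℝ) (hx : 0 < x) :
    (1:ℝ)/3 * ((1/(2*x+1))^2 * (1 - (1/(2*x+1))^2)⁻¹) = 1/(12*x) - 1/(12*(x+1)) := by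
  have h2x : (0:ℝ) < 2*x+1 := by linarith
  have h1s : (0:ℝ) < 1 - (1/(2*x+1))^2 := by
    rw [div_pow, one_pow, sub_pos, div_lt_one (by positivity)]
    nlinarith
  have hne : x*12+x^2*12 ≠ 0 := by positivity
  field_simp
  rw [div_eq_iff (by nlinarith : ((2 * x + 1) ^ 2 - 1) ≠ 0)]
  ring

lemma aux_lower (x : ℝ) (hx : 0 < x) :
    (1 / (12 * x) - 1 / (360 * x^3)) - (1 / (12 * (x+1)) - 1 / (360 * (x+1)^3)) ≤
      1/3 * (1/(2*x+1))^2 + 1/5 * ((1/(2*x+1))^2)^2 := by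
  have h2x : (0:ℝ) < 2*x+1 := by linarith
  have key : 1/3 * (1/(2*x+1))^2 + 1/5 * ((1/(2*x+1))^2)^2
      - ((1 / (12 * x) - 1 / (360 * x^3)) - (1 / (12 * (x+1)) - 1 / (360 * (x+1)^3)))
      = (10*x^4 + 20*x^3 + 21*x^2 + 11*x + 1) / (360 * x^3 * (x+1)^3 * (2*x+1)^4) := by
    field_simp
    ring
  nlinarith [key, div_nonneg (by nlinarith : (0:ℝ) ≤ 10*x^4 + 20*x^3 + 21*x^2 + 11*x + 1)
    (by positivity : (0:ℝ) ≤ 360 * x^3 * (x+1)^3 * (2*x+1)^4)]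

lemma diff_upper (m : ℕ) :
    Real.log (stirlingSeq (m + 1)) - Real.log (stirlingSeq (m + 2)) ≤
      1 / (12 * ((m:ℝ)+1)) - 1 / (12 * ((m:ℝ)+2)) := by
  have hx0 : (0:ℝ) < (m:ℝ) + 1 := by positivity
  have hs0 : (0:ℝ) ≤ (1 / (2 * ((m:ℝ)+1) + 1))^2 := sq_nonneg _
  have hs1 : (1 / (2 * ((m:ℝ)+1) + 1))^2 < 1 := by
    rw [div_pow, one_pow, div_lt_one (by positivity)]
    nlinarith [Nat.cast_nonneg (α := ℝ) m]
  have hgeo := ((hasSum_geometric_of_lt_one hs0 hs1).mul_left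
    ((1 / (2 * ((m:ℝ)+1) + 1))^2)).mul_left (1/3)
  simp_rw [← _root_.pow_succ'] at hgeo
  have hsum := Stirling.log_stirlingSeq_diff_hasSum m
  push_cast at hsum
  have hle : ∀ k : ℕ, (1 : ℝ) / (2 * ((k:ℝ) + 1) + 1) * ((1 / (2 * ((m:ℝ) + 1) + 1)) ^ 2) ^ (k + 1)
      ≤ (1/3 : ℝ) * ((1 / (2 * ((m:ℝ)+1) + 1))^2) ^ (k+1) := by
    intro k
    apply mul_le_mul_of_nonneg_right _ (pow_nonneg hs0 _)
    rw [div_le_div_iff₀ (by positivity) (by norm_num)]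
    nlinarith [Nat.cast_nonneg (α := ℝ) k]
  have hmain := hasSum_le hle hsum hgeo
  refine hmain.trans (le_of_eq ?_)
  have := aux_geo ((m:ℝ)+1) hx0
  rw [show ((m:ℝ)+1+1) = (m:ℝ)+2 by ring] at this
  rw [← this]

lemma diff_lower (m : ℕ) :
    (1 / (12 * ((m:ℝ)+1)) - 1 / (360 * ((m:ℝ)+1)^3))
      - (1 / (12 * ((m:ℝ)+2)) - 1 / (360 * ((m:ℝ)+2)^3)) ≤
      Real.log (stirlingSeq (m + 1)) - Real.log (stirlingSeq (m + 2)) := by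
  have hx0 : (0:ℝ) < (m:ℝ) + 1 := by positivity
  have hsum := Stirling.log_stirlingSeq_diff_hasSum m
  push_cast at hsum
  have hpart := sum_le_hasSum (Finset.range 2) (fun i _ => by positivity) hsum
  have hval : ∑ k ∈ Finset.range 2,
      (1 : ℝ) / (2 * ((k:ℝ) + 1) + 1) * ((1 / (2 * ((m:ℝ) + 1) + 1)) ^ 2) ^ (k + 1)
      = 1/3 * ((1 / (2 * ((m:ℝ)+1) + 1))^2) + 1/5 * ((1 / (2 * ((m:ℝ)+1) + 1))^2)^2 := by
    rw [Finset.sum_range_succ, Finset.sum_range_one]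
    norm_num
  rw [hval] at hpart
  refine le_trans ?_ hpart
  have := aux_lower ((m:ℝ)+1) hx0
  rw [show ((m:ℝ)+1+1) = (m:ℝ)+2 by ring] at this
  linarith

lemma err_bounds (n : ℕ) (hn : 1 ≤ n) :
    1/(12*(n:ℝ)) - 1/(360*(n:ℝ)^3) ≤ stirlingError n ∧ stirlingError n ≤ 1/(12*(n:ℝ)) := by
  have key : ∀ m : ℕ,
      ((1/(12*(n:ℝ)) - 1/(360*(n:ℝ)^3)) - (1/(12*((n+m:ℕ):ℝ)) - 1/(360*((n+m:ℕ):ℝ)^3))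
        ≤ stirlingError n - stirlingError (n+m))
      ∧ (stirlingError n - stirlingError (n+m) ≤ 1/(12*(n:ℝ)) - 1/(12*((n+m:ℕ):ℝ))) := by
    intro m
    induction m with
    | zero => simp
    | succ m ih =>
      obtain ⟨k, hk⟩ : ∃ k, n + m = k + 1 := ⟨n+m-1, by omega⟩
      have hup := diff_upper k
      have hlo := diff_lower k
      have heq : stirlingError (n+m) - stirlingError (n+m+1)
          = Real.log (stirlingSeq (k+1)) - Real.log (stirlingSeq (k+2)) := by
        rw [show n+m+1 = k+2 by omega, hk,
          stirlingError_eq (k+1) (by omega), stirlingError_eq (k+2) (by omega)]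
        ring
      have hc1 : ((k:ℝ)+1) = ((n+m:ℕ):ℝ) := by push_cast [hk]; ring
      have hc2 : ((k:ℝ)+2) = ((n+m+1:ℕ):ℝ) := by
        push_cast [show n+m+1 = k+2 by omega]; ring
      rw [hc1, hc2] at hup hlo
      obtain ⟨ih1, ih2⟩ := ih
      rw [show n+(m+1) = n+m+1 by omega]
      constructor <;> linarith [heq]
  have hNat : Tendsto (fun m : ℕ => ((n+m:ℕ):ℝ)) atTop atTop :=
    tendsto_natCast_atTop_atTop.comp
      ((tendsto_add_atTop_nat n).congr (fun m => Nat.add_comm m n))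
  have h1 : Tendsto (fun m => stirlingError (n+m)) atTop (𝓝 0) :=
    (tendsto_stirlingError.comp (tendsto_add_atTop_nat n)).congr
      (fun m => by simp [Function.comp, Nat.add_comm])
  have h2 : Tendsto (fun m : ℕ => 1/(12*((n+m:ℕ):ℝ))) atTop (𝓝 0) := by
    simpa only [one_div, Pi.inv_def] using
      (hNat.const_mul_atTop (by norm_num : (0:ℝ) < 12)).inv_tendsto_atTop
  have h3 : Tendsto (fun m : ℕ => 1/(360*((n+m:ℕ):ℝ)^3)) atTop (𝓝 0) := by
    have hc : Tendsto (fun m : ℕ => ((n+m:ℕ):ℝ)^3) atTop atTop :=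
      (tendsto_pow_atTop (by norm_num : (3:ℕ) ≠ 0)).comp hNat
    simpa only [one_div, Pi.inv_def] using
      (hc.const_mul_atTop (by norm_num : (0:ℝ) < 360)).inv_tendsto_atTop
  constructor
  · have hf : Tendsto (fun m : ℕ => (1/(12*(n:ℝ)) - 1/(360*(n:ℝ)^3))
        - (1/(12*((n+m:ℕ):ℝ)) - 1/(360*((n+m:ℕ):ℝ)^3)) + stirlingError (n+m)) atTop
        (𝓝 ((1/(12*(n:ℝ)) - 1/(360*(n:ℝ)^3)))) := by
      have := ((tendsto_const_nhds (x := 1/(12*(n:ℝ)) - 1/(360*(n:ℝ)^3))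
        (f := atTop (α := ℕ))).sub (h2.sub h3)).add h1
      simpa using this
    exact le_of_tendsto' hf (fun m => by linarith [(key m).1])
  · have hf : Tendsto (fun m : ℕ => 1/(12*(n:ℝ)) - 1/(12*((n+m:ℕ):ℝ))
        + stirlingError (n+m)) atTop (𝓝 (1/(12*(n:ℝ)))) := by
      have := ((tendsto_const_nhds (x := 1/(12*(n:ℝ))) (f := atTop (α := ℕ))).sub h2).add h1
      simpa using this
    exact ge_of_tendsto' hf (fun m => by linarith [(key m).2])

end MichelAux

open Filter Topology Stirling in
/-- **Michel's inequality**: for every `n ≥ 3`,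
`|e^{r_n} − 1 − 1/(12n) − 1/(288n²)| ≤ 1/(360n³) + 1/(108n⁴)`. -/
theorem michel_inequality (n : ℕ) (hn : 3 ≤ n) :
    |Real.exp (stirlingError n) - 1 - 1 / (12 * (n : ℝ)) - 1 / (288 * (n : ℝ) ^ 2)| ≤
      1 / (360 * (n : ℝ) ^ 3) + 1 / (108 * (n : ℝ) ^ 4) := by
  have hx : (3:ℝ) ≤ (n:ℝ) := by exact_mod_cast hn
  have hx0 : (0:ℝ) < n := by linarith
  obtain ⟨hlo, hhi⟩ := err_bounds n (by omega)
  set r := stirlingError n with hr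
  set A := 1/(12*(n:ℝ)) with hA
  set B := 1/(360*(n:ℝ)^3) with hB
  set C := 1/(288*(n:ℝ)^2) with hC
  set D := 1/(108*(n:ℝ)^4) with hD
  have hA0 : 0 < A := by rw [hA]; positivity
  have hB0 : 0 < B := by rw [hB]; positivity
  have hC0 : 0 < C := by rw [hC]; positivity
  have hD0 : 0 < D := by rw [hD]; positivity
  have hg0 : 0 < A - B := by
    rw [hA, hB, sub_pos, div_lt_div_iff₀ (by positivity) (by positivity)]
    nlinarith
  have hr0 : 0 ≤ r := le_of_lt (lt_of_lt_of_le hg0 hlo)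
  have hle1 : A ≤ 1 := by rw [hA, div_le_one (by positivity)]; linarith
  have hA2 : A^2 = 2*C := by rw [hA, hC]; field_simp; ring
  have hAB : A*B = (1/40)*D := by rw [hA, hB, hD]; field_simp; ring
  have hA3 : (2/9)*A^3 = (5/108)*B := by rw [hA, hB]; field_simp; ring
  have hup : Real.exp r ≤ 1 + r + r^2/2 + 2/9 * r^3 := by
    have h := Real.exp_bound' hr0 (le_trans hhi hle1) (n := 3) (by norm_num)
    norm_num [Finset.sum_range_succ, Nat.factorial] at h
    linarith
  have hlowexp : 1 + r + r^2/2 ≤ Real.exp r := Real.quadratic_le_exp_of_nonneg hr0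
  have hsq : (A-B)^2 ≤ r^2 := by nlinarith
  have hr2 : r^2 ≤ A^2 := by nlinarith
  have hr3 : r^3 ≤ A^3 := pow_le_pow_left₀ hr0 hhi 3
  have hexp2 : (A-B)^2 = A^2 - 2*(A*B) + B^2 := by ring
  rw [abs_le]
  constructor
  · linarith [hlowexp, hlo, hsq, hexp2, hA2, hAB, sq_nonneg B, hD0.le]
  · linarith [hup, hr2, hr3, hA2, hA3, hhi, hB0.le, hD0.le]
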